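/- arXiv:1712.10234 — 6 statements merged into one kernel-verified Lean document; each statement's English description precedes it below -/
import Mathlib

section
/- Let N_L, N_R ∈ ℕ, let a ∈ ℝ^{N_L+1}, let A = diag(a) ∈ ℝ^{(N_L+1)×(N_L+1)}, and let B ∈ ℝ^{(N_L+1)×(N_R+1)} be an arbitrary matrix. Let M_L ∈ ℝ^{(N_L+1)×(N_L+1)} and M_R ∈ ℝ^{(N_R+1)×(N_R+1)} be diagonal matrices and let P_{R2L} ∈ ℝ^{(N_L+1)×(N_R+1)}, P_{L2R} ∈ ℝ^{(N_R+1)×(N_L+1)} satisfy the M-compatibility condition P_{R2L}ᵀ M_L = M_R P_{L2R}. Then ⟨a, 𝔼(P_{R2L} Bᵀ)⟩_{M_L} = ⟨𝟙^R, 𝔼(P_{L2R} A B)⟩_{M_R}, where 𝟙^R ∈ ℝ^{N_R+1} is the vector of all ones. -/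
open Matrix BigOperators

/-- Discrete inner product `⟨a, b⟩_M := aᵀ M b`. -/
noncomputable def dip {n : ℕ} (M : Matrix (Fin n) (Fin n) ℝ) (a b : Fin n → ℝ) : ℝ :=
  a ⬝ᵥ M.mulVec b

/-!
Both sides are traces: `⟨a, 𝔼(W)⟩_{diag ω} = tr(diag(ω a) W)`. Transposing and cycling turns the
left-hand side into `tr(P_{R2L}ᵀ M_L A B)`, and M-compatibility replaces `P_{R2L}ᵀ M_L` by
`M_R P_{L2R}`, which is the right-hand side.
-/

namespace Matrix

variable {m n R : Type*} [Fintype m] [Fintype n] [DecidableEq m] [CommSemiring R]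

theorem dotProduct_diagonal_mulVec_diag (ω a : m → R) (W : Matrix m m R) :
    a ⬝ᵥ (diagonal ω *ᵥ W.diag) = trace (diagonal (ω * a) * W) := by
  simp only [dotProduct, mulVec_diagonal, trace, diag_apply, diagonal_mul, Pi.mul_apply]
  exact Finset.sum_congr rfl fun i _ => by ring

theorem trace_diagonal_mul_mul_transpose (d : m → R) (P B : Matrix m n R) :
    trace (diagonal d * (P * Bᵀ)) = trace (Pᵀ * diagonal d * B) := by
  rw [← trace_transpose, transpose_mul, transpose_mul, diagonal_transpose, transpose_transpose,
    Matrix.mul_assoc, trace_mul_comm]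

end Matrix

theorem dip_diagonal_diag {n : ℕ} (ω a : Fin n → ℝ) (W : Matrix (Fin n) (Fin n) ℝ) :
    dip (diagonal ω) a W.diag = trace (diagonal (ω * a) * W) :=
  dotProduct_diagonal_mulVec_diag ω a W

/-- Lemma 3 of the paper: for `M`-compatible projection operators,
`⟨a, 𝔼(P_{R2L} Bᵀ)⟩_{M_L} = ⟨𝟙^R, 𝔼(P_{L2R} A B)⟩_{M_R}` with `A = diag(a)`. -/
theorem projection_inner_product_lemma
    (NL NR : ℕ)
    (a : Fin (NL + 1) → ℝ)
    (ωL : Fin (NL + 1) → ℝ) (ωR : Fin (NR + 1) → ℝ)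
    (B : Matrix (Fin (NL + 1)) (Fin (NR + 1)) ℝ)
    (PR2L : Matrix (Fin (NL + 1)) (Fin (NR + 1)) ℝ)
    (PL2R : Matrix (Fin (NR + 1)) (Fin (NL + 1)) ℝ)
    (hcompat : PR2L.transpose * Matrix.diagonal ωL = Matrix.diagonal ωR * PL2R) :
    dip (Matrix.diagonal ωL) a ((PR2L * B.transpose).diag)
      = dip (Matrix.diagonal ωR) (fun _ => 1)
          ((PL2R * Matrix.diagonal a * B).diag) := by
  calc dip (diagonal ωL) a (PR2L * Bᵀ).diag
      = trace (PR2Lᵀ * diagonal (ωL * a) * B) := by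
        rw [dip_diagonal_diag, trace_diagonal_mul_mul_transpose]
    _ = trace (PR2Lᵀ * diagonal ωL * diagonal a * B) := by
        rw [Matrix.mul_assoc PR2Lᵀ (diagonal ωL), diagonal_mul_diagonal]
        rfl
    _ = trace (diagonal ωR * (PL2R * diagonal a * B)) := by
        rw [hcompat]
        simp only [Matrix.mul_assoc]
    _ = dip (diagonal ωR) 1 (PL2R * diagonal a * B).diag := by
        rw [dip_diagonal_diag, mul_one]
end

section
/- Let N_L, N_R ∈ ℕ, let M_L ∈ ℝ^{(N_L+1)×(N_L+1)} and M_R ∈ ℝ^{(N_R+1)×(N_R+1)} be diagonal matrices, and let P_{R2L} ∈ ℝ^{(N_L+1)×(N_R+1)}, P_{L2R} ∈ ℝ^{(N_R+1)×(N_L+1)} satisfy the M-compatibility condition P_{R2L}ᵀ M_L = M_R P_{L2R}. For any flux matrix F ∈ ℝ^{(N_L+1)×(N_R+1)}, define the projected interface fluxes F^L := 𝔼(P_{R2L} Fᵀ) ∈ ℝ^{N_L+1} and F^R := 𝔼(P_{L2R} F) ∈ ℝ^{N_R+1}. Then the interface contribution to the primary quantities vanishes: ⟨𝟙^R, F^R⟩_{M_R}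 − ⟨𝟙^L, F^L⟩_{M_L} = 0, where 𝟙^L, 𝟙^R are the all-ones vectors in ℝ^{N_L+1} and ℝ^{N_R+1}. -/
/-!
Both weighted sums are traces, `tr (M_R P_{L2R} F)` and `tr (M_L P_{R2L} Fᵀ)`. Compatibility turns
the first into `tr (P_{R2L}ᵀ M_L F)`, which is the second after transposing and cycling.
-/

open Matrix BigOperators

theorem dip_diagonal_one_diag {n : ℕ} (ω : Fin n → ℝ) (A : Matrix (Fin n) (Fin n) ℝ) :
    dip (diagonal ω) (fun _ => 1) A.diag = trace (diagonal ω * A) := by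
  simp [dip, trace, dotProduct, mulVec_diagonal]

namespace Matrix

variable {m n R : Type*} [Fintype m] [Fintype n] [DecidableEq m] [DecidableEq n] [CommSemiring R]

theorem trace_diagonal_mul_mul_eq_of_transpose_mul_diagonal_eq
    {ωL : m → R} {ωR : n → R} {PR2L : Matrix m n R} {PL2R : Matrix n m R}
    (hcompat : PR2Lᵀ * diagonal ωL = diagonal ωR * PL2R) (F : Matrix m n R) :
    trace (diagonal ωR * (PL2R * F)) = trace (diagonal ωL * (PR2L * Fᵀ)) :=
  calc trace (diagonal ωR * (PL2R * F))
      = trace (PR2Lᵀ * diagonal ωL * F) := by rw [hcompat, Matrix.mul_assoc]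
    _ = trace (diagonal ωL * (PR2L * Fᵀ)) := by
      rw [← trace_transpose, transpose_mul, transpose_mul, transpose_transpose, diagonal_transpose,
        trace_mul_comm, Matrix.mul_assoc]

end Matrix

/-- Primary conservation at a p-nonconforming interface (Theorem 1, conservation part):
`⟨𝟙^R, F^R⟩_{M_R} − ⟨𝟙^L, F^L⟩_{M_L} = 0` for the projected interface fluxes
`F^L = 𝔼(P_{R2L} Fᵀ)` and `F^R = 𝔼(P_{L2R} F)`. -/
theorem primary_conservation_p_refinement
    (NL NR : ℕ)
    (ωL : Fin (NL + 1) → ℝ) (ωR : Fin (NR + 1) → ℝ)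
    (PR2L : Matrix (Fin (NL + 1)) (Fin (NR + 1)) ℝ)
    (PL2R : Matrix (Fin (NR + 1)) (Fin (NL + 1)) ℝ)
    (hcompat : PR2L.transpose * Matrix.diagonal ωL = Matrix.diagonal ωR * PL2R)
    (F : Matrix (Fin (NL + 1)) (Fin (NR + 1)) ℝ) :
    dip (Matrix.diagonal ωR) (fun _ => 1) ((PL2R * F).diag)
      - dip (Matrix.diagonal ωL) (fun _ => 1) ((PR2L * F.transpose).diag) = 0 := by
  rw [dip_diagonal_one_diag, dip_diagonal_one_diag, sub_eq_zero]
  exact trace_diagonal_mul_mul_eq_of_transpose_mul_diagonal_eq hcompat F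
end

section
/- Let N_L, N_R, M ∈ ℕ with M ≥ 1, let M_L ∈ ℝ^{(N_L+1)×(N_L+1)} and M_R ∈ ℝ^{(N_R+1)×(N_R+1)} be diagonal matrices, and let P_{R2L} ∈ ℝ^{(N_L+1)×(N_R+1)}, P_{L2R} ∈ ℝ^{(N_R+1)×(N_L+1)} satisfy P_{R2L}ᵀ M_L = M_R P_{L2R} and be exact on constants: P_{R2L} 𝟙^R = 𝟙^L and P_{L2R} 𝟙^L = 𝟙^R. For each q ∈ {1,…,M} let V^{q,L} ∈ ℝ^{N_L+1}, V^{q,R} ∈ ℝ^{N_R+1}, let Ψ^L ∈ ℝ^{N_L+1}, Ψ^R ∈ ℝ^{N_R+1}, and let F^q ∈ ℝ^{(N_L+1)×(N_R+1)} be matrices satisfying the entropy-conservation condition ∑_{q=1}^M (V^{q,R}_j − V^{q,L}_i) F^q_{ij} = Ψ^R_j − Ψ^L_i for all i ∈ {0,…,N_L}, j ∈ {0,…,N_R}. Define F^{q,L} := 𝔼(P_{R2L} (F^q)ᵀ) and F^{q,R} := 𝔼(P_{L2R} F^q). Then the interface entropy contribution vanishes: ∑_{q=1}^M ⟨V^{q,R},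 F^{q,R}⟩_{M_R} − ⟨𝟙^R, Ψ^R⟩_{M_R} − ∑_{q=1}^M ⟨V^{q,L}, F^{q,L}⟩_{M_L} + ⟨𝟙^L, Ψ^L⟩_{M_L} = 0. -/
open Matrix BigOperators

/-!
Both one-sided contributions are sums over all node pairs `(i, j)` with the common weight
`ωL i * PR2L i j = ωR j * PL2R j i`, which is what `M`-compatibility says entrywise. Exactness on
constants (unit row sums of the projections) lets the entropy flux potential of each side be
spread over the same pairs, so the total is the weighted sum of the entropy conservation
defects `∑ q, (VR q j - VL q i) * F q i j - (ΨR j - ΨL i)`, all of which vanish.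
-/

lemma dip_diagonal {n : ℕ} (ω a b : Fin n → ℝ) :
    dip (diagonal ω) a b = ∑ j, ω j * a j * b j := by
  simp only [dip, dotProduct, mulVec_diagonal]
  exact Finset.sum_congr rfl fun j _ => by ring

lemma sum_dip_diagonal_diag_mul_sub_dip_one {n : ℕ} {ι Q : Type*} [Fintype ι] [Fintype Q]
    (ω : Fin n → ℝ) (P : Matrix (Fin n) ι ℝ) (hP : P *ᵥ (fun _ => 1) = fun _ => 1)
    (V : Q → Fin n → ℝ) (G : Q → Matrix ι (Fin n) ℝ) (Ψ : Fin n → ℝ) :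
    ∑ q, dip (diagonal ω) (V q) (P * G q).diag - dip (diagonal ω) (fun _ => 1) Ψ
      = ∑ j, ∑ i, ω j * P j i * (∑ q, V q j * G q i j - Ψ j) := by
  have hrow : ∀ j, ∑ i, P j i = 1 := fun j => by
    simpa [mulVec, dotProduct] using congrFun hP j
  simp only [dip_diagonal, diag_apply, mul_apply, Finset.sum_comm (γ := Q),
    ← Finset.sum_sub_distrib]
  refine Finset.sum_congr rfl fun j _ => ?_
  rw [← hrow j]
  simp only [Finset.mul_sum, Finset.sum_mul, mul_sub, Finset.sum_sub_distrib]
  congr 1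
  rw [Finset.sum_comm]
  exact Finset.sum_congr rfl fun i _ => Finset.sum_congr rfl fun q _ => by ring

theorem entropy_conservation_p_refinement_general
    (NL NR M : ℕ)
    (ωL : Fin (NL + 1) → ℝ) (ωR : Fin (NR + 1) → ℝ)
    (PR2L : Matrix (Fin (NL + 1)) (Fin (NR + 1)) ℝ)
    (PL2R : Matrix (Fin (NR + 1)) (Fin (NL + 1)) ℝ)
    (hcompat : PR2L.transpose * Matrix.diagonal ωL = Matrix.diagonal ωR * PL2R)
    (hconstR : PR2L.mulVec (fun _ => 1) = fun _ => 1)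
    (hconstL : PL2R.mulVec (fun _ => 1) = fun _ => 1)
    (VL : Fin M → Fin (NL + 1) → ℝ) (VR : Fin M → Fin (NR + 1) → ℝ)
    (ΨL : Fin (NL + 1) → ℝ) (ΨR : Fin (NR + 1) → ℝ)
    (F : Fin M → Matrix (Fin (NL + 1)) (Fin (NR + 1)) ℝ)
    (hEC : ∀ (i : Fin (NL + 1)) (j : Fin (NR + 1)),
      ∑ q, (VR q j - VL q i) * F q i j = ΨR j - ΨL i) :
    (∑ q, dip (Matrix.diagonal ωR) (VR q) ((PL2R * F q).diag))
      - dip (Matrix.diagonal ωR) (fun _ => 1) ΨR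
      - (∑ q, dip (Matrix.diagonal ωL) (VL q) ((PR2L * (F q).transpose).diag))
      + dip (Matrix.diagonal ωL) (fun _ => 1) ΨL = 0 := by
  have hweight : ∀ i j, ωL i * PR2L i j = ωR j * PL2R j i := fun i j => by
    simpa [mul_comm] using congrFun₂ hcompat j i
  have hR := sum_dip_diagonal_diag_mul_sub_dip_one ωR PL2R hconstL VR F ΨR
  have hL := sum_dip_diagonal_diag_mul_sub_dip_one ωL PR2L hconstR VL (fun q => (F q)ᵀ) ΨL
  simp only [transpose_apply, hweight] at hL
  rw [Finset.sum_comm] at hL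
  calc _ = (∑ q, dip (diagonal ωR) (VR q) (PL2R * F q).diag - dip (diagonal ωR) (fun _ => 1) ΨR)
        - (∑ q, dip (diagonal ωL) (VL q) (PR2L * (F q)ᵀ).diag
          - dip (diagonal ωL) (fun _ => 1) ΨL) := by ring
    _ = ∑ j, ∑ i, ωR j * PL2R j i
          * ((∑ q, (VR q j - VL q i) * F q i j) - (ΨR j - ΨL i)) := by
        rw [hR, hL, ← Finset.sum_sub_distrib]
        refine Finset.sum_congr rfl fun j _ => ?_
        rw [← Finset.sum_sub_distrib]
        refine Finset.sum_congr rfl fun i _ => ?_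
        simp only [sub_mul, Finset.sum_sub_distrib]
        ring
    _ = 0 := by simp only [hEC, sub_self, mul_zero, Finset.sum_const_zero]

/-- Entropy conservation at a p-nonconforming interface (Theorem 1, entropy part):
with `M`-compatible projections exact on constants and an entropy conservative
two-point flux, the interface entropy contribution vanishes. -/
theorem entropy_conservation_p_refinement
    (NL NR M : ℕ) (hM : 1 ≤ M)
    (ωL : Fin (NL + 1) → ℝ) (ωR : Fin (NR + 1) → ℝ)
    (PR2L : Matrix (Fin (NL + 1)) (Fin (NR + 1)) ℝ)
    (PL2R : Matrix (Fin (NR + 1)) (Fin (NL + 1)) ℝ)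
    (hcompat : PR2L.transpose * Matrix.diagonal ωL = Matrix.diagonal ωR * PL2R)
    (hconstR : PR2L.mulVec (fun _ => 1) = fun _ => 1)
    (hconstL : PL2R.mulVec (fun _ => 1) = fun _ => 1)
    (VL : Fin M → Fin (NL + 1) → ℝ) (VR : Fin M → Fin (NR + 1) → ℝ)
    (ΨL : Fin (NL + 1) → ℝ) (ΨR : Fin (NR + 1) → ℝ)
    (F : Fin M → Matrix (Fin (NL + 1)) (Fin (NR + 1)) ℝ)
    (hEC : ∀ (i : Fin (NL + 1)) (j : Fin (NR + 1)),
      ∑ q, (VR q j - VL q i) * F q i j = ΨR j - ΨL i) :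
    (∑ q, dip (Matrix.diagonal ωR) (VR q) ((PL2R * F q).diag))
      - dip (Matrix.diagonal ωR) (fun _ => 1) ΨR
      - (∑ q, dip (Matrix.diagonal ωL) (VL q) ((PR2L * (F q).transpose).diag))
      + dip (Matrix.diagonal ωL) (fun _ => 1) ΨL = 0 :=
  entropy_conservation_p_refinement_general NL NR M ωL ωR PR2L PL2R hcompat hconstR hconstL VL VR ΨL
    ΨR F hEC
end

section
/- Under the setting of the h-refined interface (E left elements with heights Δ_{L_i} coupled to one right element of height Δ_R, diagonal matrices M_{L_i}, M_R, projections satisfying Δ_{L_i} P_{R2L_i}ᵀ M_{L_i} = Δ_R M_R P_{L_i2R} and P_{R2L_i} 𝟙^R = 𝟙^{L_i}), let λ ∈ ℝ, let F^q_i ∈ ℝ^{(N_{L_i}+1)×(N_R+1)} be arbitrary flux matrices, and let V^{q,L_i} ∈ ℝ^{N_{L_i}+1}, V^{q,R} ∈ ℝ^{N_R+1} be arbitrary vectors. Define the dissipative fluxes F^{ES,q,L_i} := 𝔼(P_{R2L_i}(F^q_i)ᵀ) − (λ/2)(P_{R2L_i} V^{q,R} − V^{q,L_i}) and F^{ES,q,R}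 := ∑_{i=1}^E 𝔼(P_{L_i2R} F^q_i) − (λ/2) ∑_{i=1}^E P_{L_i2R}(P_{R2L_i} V^{q,R} − V^{q,L_i}). Then primary conservation still holds: Δ_R ⟨𝟙^R, F^{ES,q,R}⟩_{M_R} − ∑_{i=1}^E Δ_{L_i} ⟨𝟙^{L_i}, F^{ES,q,L_i}⟩_{M_{L_i}} = 0 for each q. -/
open Matrix BigOperators

/-!
Both interface fluxes integrate to the same total because the projections are adjoint
with respect to the scaled quadrature inner products:
`Δ_R ⟨u, P_{L2R} w⟩_{M_R} = Δ_L ⟨P_{R2L} u, w⟩_{M_L}`.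
For the central flux part this is a trace identity, `Δ_R tr(M_R P_{L2R} F) = Δ_L tr(M_L P_{R2L} Fᵀ)`;
for the dissipation term it is applied with `u = 𝟙`, which `P_{R2L}` preserves.
Summing the resulting element-by-element balance over the left elements gives the theorem.
-/

namespace Matrix

variable {m n : Type*} [Fintype m] [Fintype n] [DecidableEq m] [DecidableEq n]

theorem one_dotProduct_diagonal_mulVec_diag (ω : n → ℝ) (A : Matrix n n ℝ) :
    (fun _ => 1) ⬝ᵥ diagonal ω *ᵥ A.diag = (diagonal ω * A).trace := by
  simp [dotProduct, mulVec_diagonal, trace, diagonal_mul]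

section Compatible

variable {ΔL ΔR : ℝ} {ωL : m → ℝ} {ωR : n → ℝ} {P : Matrix m n ℝ} {Q : Matrix n m ℝ}

theorem smul_dotProduct_diagonal_mulVec_mulVec_of_compat
    (hcompat : ΔL • (Pᵀ * diagonal ωL) = ΔR • (diagonal ωR * Q)) (u : n → ℝ) (w : m → ℝ) :
    ΔR * (u ⬝ᵥ diagonal ωR *ᵥ Q *ᵥ w) = ΔL * (P *ᵥ u ⬝ᵥ diagonal ωL *ᵥ w) := by
  calc ΔR * (u ⬝ᵥ diagonal ωR *ᵥ Q *ᵥ w)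
      = u ⬝ᵥ (ΔR • (diagonal ωR * Q)) *ᵥ w := by
        rw [mulVec_mulVec, smul_mulVec, dotProduct_smul, smul_eq_mul]
    _ = u ⬝ᵥ (ΔL • (Pᵀ * diagonal ωL)) *ᵥ w := by rw [hcompat]
    _ = ΔL * (P *ᵥ u ⬝ᵥ diagonal ωL *ᵥ w) := by
        rw [smul_mulVec, dotProduct_smul, smul_eq_mul, ← mulVec_mulVec, dotProduct_mulVec,
          vecMul_transpose]

theorem smul_trace_diagonal_mul_mul_of_compat
    (hcompat : ΔL • (Pᵀ * diagonal ωL) = ΔR • (diagonal ωR * Q)) (F : Matrix m n ℝ) :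
    ΔR * (diagonal ωR * (Q * F)).trace = ΔL * (diagonal ωL * (P * Fᵀ)).trace := by
  calc ΔR * (diagonal ωR * (Q * F)).trace
      = (ΔR • (diagonal ωR * Q) * F).trace := by
        rw [smul_mul, trace_smul, smul_eq_mul, Matrix.mul_assoc]
    _ = (ΔL • (Pᵀ * diagonal ωL) * F).trace := by rw [hcompat]
    _ = ΔL * (diagonal ωL * (P * Fᵀ)).trace := by
        rw [smul_mul, trace_smul, smul_eq_mul, trace_mul_comm, ← trace_transpose]
        simp only [transpose_mul, transpose_transpose, diagonal_transpose, Matrix.mul_assoc]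

theorem smul_one_dotProduct_interface_flux_eq_of_compat
    (hcompat : ΔL • (Pᵀ * diagonal ωL) = ΔR • (diagonal ωR * Q))
    (hconst : P *ᵥ (fun _ => 1) = fun _ => 1) (F : Matrix m n ℝ) (c : ℝ) (w : m → ℝ) :
    ΔR * ((fun _ => 1) ⬝ᵥ diagonal ωR *ᵥ ((Q * F).diag - c • Q *ᵥ w))
      = ΔL * ((fun _ => 1) ⬝ᵥ diagonal ωL *ᵥ ((P * Fᵀ).diag - c • w)) := by
  have hflux := smul_trace_diagonal_mul_mul_of_compat hcompat F
  have hdiss := smul_dotProduct_diagonal_mulVec_mulVec_of_compat hcompat (fun _ => 1) w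
  rw [hconst] at hdiss
  simp only [mulVec_sub, dotProduct_sub, mulVec_smul, dotProduct_smul, smul_eq_mul,
    one_dotProduct_diagonal_mulVec_diag]
  linear_combination hflux - c * hdiss

end Compatible

end Matrix

theorem primary_conservation_with_dissipation_general
    (E : ℕ) (M : ℕ)
    (NR : ℕ) (ΔR : ℝ)
    (NL : Fin E → ℕ) (ΔL : Fin E → ℝ)
    (ωL : (i : Fin E) → Fin (NL i + 1) → ℝ) (ωR : Fin (NR + 1) → ℝ)
    (PR2L : (i : Fin E) → Matrix (Fin (NL i + 1)) (Fin (NR + 1)) ℝ)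
    (PL2R : (i : Fin E) → Matrix (Fin (NR + 1)) (Fin (NL i + 1)) ℝ)
    (hcompat : ∀ i, ΔL i • ((PR2L i).transpose * Matrix.diagonal (ωL i))
      = ΔR • (Matrix.diagonal ωR * PL2R i))
    (hconstR : ∀ i, (PR2L i).mulVec (fun _ => 1) = fun _ => 1)
    (lam : ℝ)
    (VL : Fin M → (i : Fin E) → Fin (NL i + 1) → ℝ)
    (VR : Fin M → Fin (NR + 1) → ℝ)
    (F : Fin M → (i : Fin E) → Matrix (Fin (NL i + 1)) (Fin (NR + 1)) ℝ) :
    ∀ q : Fin M,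
      ΔR * dip (Matrix.diagonal ωR) (fun _ => 1)
          ((∑ i, (PL2R i * F q i).diag)
            - (lam / 2) • ∑ i, (PL2R i).mulVec ((PR2L i).mulVec (VR q) - VL q i))
        - ∑ i, ΔL i * dip (Matrix.diagonal (ωL i)) (fun _ => 1)
            ((PR2L i * (F q i).transpose).diag
              - (lam / 2) • ((PR2L i).mulVec (VR q) - VL q i)) = 0 := by
  intro q
  rw [sub_eq_zero, Finset.smul_sum, ← Finset.sum_sub_distrib, dip, mulVec_sum, dotProduct_sum,
    Finset.mul_sum]
  exact Finset.sum_congr rfl fun i _ =>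
    smul_one_dotProduct_interface_flux_eq_of_compat (hcompat i) (hconstR i) (F q i) (lam / 2) _

/-- Primary conservation with interface dissipation (Theorem 2, conservation
part): the dissipative entropy stable fluxes still conserve the primary
quantities at an h-nonconforming interface. -/
theorem primary_conservation_with_dissipation
    (E : ℕ) (hE : 1 ≤ E) (M : ℕ) (hM : 1 ≤ M)
    (NR : ℕ) (ΔR : ℝ) (hΔR : 0 < ΔR)
    (NL : Fin E → ℕ) (ΔL : Fin E → ℝ) (hΔL : ∀ i, 0 < ΔL i)
    (ωL : (i : Fin E) → Fin (NL i + 1) → ℝ) (ωR : Fin (NR + 1) → ℝ)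
    (PR2L : (i : Fin E) → Matrix (Fin (NL i + 1)) (Fin (NR + 1)) ℝ)
    (PL2R : (i : Fin E) → Matrix (Fin (NR + 1)) (Fin (NL i + 1)) ℝ)
    (hcompat : ∀ i, ΔL i • ((PR2L i).transpose * Matrix.diagonal (ωL i))
      = ΔR • (Matrix.diagonal ωR * PL2R i))
    (hconstR : ∀ i, (PR2L i).mulVec (fun _ => 1) = fun _ => 1)
    (lam : ℝ)
    (VL : Fin M → (i : Fin E) → Fin (NL i + 1) → ℝ)
    (VR : Fin M → Fin (NR + 1) → ℝ)
    (F : Fin M → (i : Fin E) → Matrix (Fin (NL i + 1)) (Fin (NR + 1)) ℝ) :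
    ∀ q : Fin M,
      ΔR * dip (Matrix.diagonal ωR) (fun _ => 1)
          ((∑ i, (PL2R i * F q i).diag)
            - (lam / 2) • ∑ i, (PL2R i).mulVec ((PR2L i).mulVec (VR q) - VL q i))
        - ∑ i, ΔL i * dip (Matrix.diagonal (ωL i)) (fun _ => 1)
            ((PR2L i * (F q i).transpose).diag
              - (lam / 2) • ((PR2L i).mulVec (VR q) - VL q i)) = 0 :=
  primary_conservation_with_dissipation_general E M NR ΔR NL ΔL ωL ωR PR2L PL2R hcompat hconstR lam
    VL VR F
end

section
/- Let N, M ∈ ℕ with M ≥ 1 and let Q ∈ ℝ^{(N+1)×(N+1)} satisfy Q + Qᵀ = B with B = diag(−1,0,…,0,1) and Q𝟙 = 0 (all row sums of Q vanish). Let F : {0,…,N} × {0,…,N} → ℝ^M be symmetric (F(i,m) = F(m,i)), let V : {0,…,N} → ℝ^M and Ψ : {0,…,N} → ℝ satisfy the entropy-conservation condition (V_i − V_m) · F(i,m) = Ψ_i − Ψ_m for all i, m. Then 2 ∑_{i=0}^N ∑_{m=0}^N Q_{im} V_i · F(i,m) = (V_N · F(N,N) − Ψ_N) − (V_0 · F(0,0)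 − Ψ_0). -/
open Matrix BigOperators

/-- The SBP boundary matrix `B = diag(−1, 0, …, 0, 1)`. -/
noncomputable def boundaryMatrix (N : ℕ) : Matrix (Fin (N + 1)) (Fin (N + 1)) ℝ :=
  Matrix.diagonal (fun i =>
    (if i = Fin.last N then (1 : ℝ) else 0) + (if i = 0 then (-1 : ℝ) else 0))

/-!
Write `a i m = V i · F(i,m)`. By symmetry of `F`, entropy conservation says
`a i m - a m i = Ψ i - Ψ m`, so `2 a i m` splits into the symmetric part `a i m + a m i` and
`Ψ i - Ψ m`. Against `Q`, the symmetric part only sees `Q + Qᵀ = B`; since the rows of `Q`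
sum to zero, the potential part reduces to `-∑ B i m Ψ m`. The diagonal matrix `B` then picks
out the two boundary nodes.
-/

namespace Matrix

variable {n R : Type*} [Fintype n]

theorem sum_sum_add_transpose_mul [NonUnitalNonAssocSemiring R] (Q : Matrix n n R)
    (a : n → n → R) :
    ∑ i, ∑ j, (Q + Qᵀ) i j * a i j = ∑ i, ∑ j, Q i j * (a i j + a j i) := by
  simp only [add_apply, transpose_apply, add_mul, mul_add, Finset.sum_add_distrib]
  rw [Finset.sum_comm (f := fun i j => Q j i * a i j)]

theorem sum_sum_mul_sub_of_mulVec_one_eq_zero [CommRing R] {Q : Matrix n n R}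
    (hQ : Q *ᵥ 1 = 0) (ψ : n → R) :
    ∑ i, ∑ j, Q i j * (ψ i - ψ j) = -∑ i, ∑ j, (Q + Qᵀ) i j * ψ j := by
  have hrow : ∀ i, ∑ j, Q i j = 0 := fun i => by
    simpa [mulVec, dotProduct] using congrFun hQ i
  have hweighted : ∑ i, ∑ j, Q i j * ψ i = 0 := by
    simp [← Finset.sum_mul, hrow]
  rw [sum_sum_add_transpose_mul]
  simp only [mul_sub, mul_add, Finset.sum_sub_distrib, Finset.sum_add_distrib, hweighted]
  ring

theorem two_mul_sum_sum_mul_eq_of_sub_eq_potential [CommRing R] {Q B : Matrix n n R}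
    (hQB : Q + Qᵀ = B) (hQ : Q *ᵥ 1 = 0) {a : n → n → R} {ψ : n → R}
    (ha : ∀ i j, a i j - a j i = ψ i - ψ j) :
    2 * ∑ i, ∑ j, Q i j * a i j = ∑ i, ∑ j, B i j * (a i j - ψ j) := by
  have hsplit : ∀ i j, 2 * (Q i j * a i j) = Q i j * (a i j + a j i) + Q i j * (ψ i - ψ j) :=
    fun i j => by rw [← ha]; ring
  simp only [Finset.mul_sum, hsplit, Finset.sum_add_distrib]
  rw [sum_sum_mul_sub_of_mulVec_one_eq_zero hQ, ← sum_sum_add_transpose_mul, hQB]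
  simp only [mul_sub, Finset.sum_sub_distrib]
  ring

end Matrix

theorem sum_sum_boundaryMatrix_mul (N : ℕ) (a : Fin (N + 1) → Fin (N + 1) → ℝ) :
    ∑ i, ∑ j, boundaryMatrix N i j * a i j = a (Fin.last N) (Fin.last N) - a 0 0 := by
  simp [boundaryMatrix, diagonal_apply, add_mul, ite_mul, Finset.sum_add_distrib, sub_eq_add_neg]

theorem sbp_entropy_flux_telescoping_general
    (N M : ℕ)
    (Q : Matrix (Fin (N + 1)) (Fin (N + 1)) ℝ)
    (hSBP : Q + Q.transpose = boundaryMatrix N)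
    (hconsistent : Q.mulVec (fun _ => 1) = 0)
    (F : Fin (N + 1) → Fin (N + 1) → Fin M → ℝ)
    (hsym : ∀ i m, F i m = F m i)
    (V : Fin (N + 1) → Fin M → ℝ)
    (Ψ : Fin (N + 1) → ℝ)
    (hEC : ∀ i m, (V i - V m) ⬝ᵥ F i m = Ψ i - Ψ m) :
    2 * ∑ i, ∑ m, Q i m * (V i ⬝ᵥ F i m)
      = (V (Fin.last N) ⬝ᵥ F (Fin.last N) (Fin.last N) - Ψ (Fin.last N))
        - (V 0 ⬝ᵥ F 0 0 - Ψ 0) := by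
  have hpotential : ∀ i m, V i ⬝ᵥ F i m - V m ⬝ᵥ F m i = Ψ i - Ψ m := fun i m => by
    rw [hsym m i, ← sub_dotProduct, hEC]
  rw [two_mul_sum_sum_mul_eq_of_sub_eq_potential hSBP hconsistent hpotential,
    sum_sum_boundaryMatrix_mul N (fun i m => V i ⬝ᵥ F i m - Ψ m)]

/-- Entropy telescoping identity for a consistent SBP matrix (key entropy step
of Lemma 1, Appendix A): `2 ∑_{i,m} Q_{im} V_i · F(i,m)
= (V_N · F(N,N) − Ψ_N) − (V_0 · F(0,0) − Ψ_0)`. -/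
theorem sbp_entropy_flux_telescoping
    (N M : ℕ) (hM : 1 ≤ M)
    (Q : Matrix (Fin (N + 1)) (Fin (N + 1)) ℝ)
    (hSBP : Q + Q.transpose = boundaryMatrix N)
    (hconsistent : Q.mulVec (fun _ => 1) = 0)
    (F : Fin (N + 1) → Fin (N + 1) → Fin M → ℝ)
    (hsym : ∀ i m, F i m = F m i)
    (V : Fin (N + 1) → Fin M → ℝ)
    (Ψ : Fin (N + 1) → ℝ)
    (hEC : ∀ i m, (V i - V m) ⬝ᵥ F i m = Ψ i - Ψ m) :
    2 * ∑ i, ∑ m, Q i m * (V i ⬝ᵥ F i m)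
      = (V (Fin.last N) ⬝ᵥ F (Fin.last N) (Fin.last N) - Ψ (Fin.last N))
        - (V 0 ⬝ᵥ F 0 0 - Ψ 0) :=
  sbp_entropy_flux_telescoping_general N M Q hSBP hconsistent F hsym V Ψ hEC
end

section
/- Let N, M ∈ ℕ with M ≥ 1, let ω₀,…,ω_N ∈ ℝ, let J ∈ ℝ, and let Q ∈ ℝ^{(N+1)×(N+1)} satisfy Q + Qᵀ = B with B = diag(−1,0,…,0,1). Let F̃, G̃ : ℝ^M × ℝ^M → ℝ^M be symmetric (F̃(a,b) = F̃(b,a)) and consistent with physical fluxes f̃, g̃ : ℝ^M → ℝ^M (F̃(a,a) = f̃(a), G̃(a,a) = g̃(a)). Let U : {0,…,N}² → ℝ^M be nodal solution values and F*⁺, F*⁻, G*⁺, G*⁻ : {0,…,N} → ℝ^M be surface numerical fluxes. Suppose (U_t)_{ij} ∈ ℝ^M satisfies, for all i,j: J ω_i ω_j (U_t)_{ij} = −ω_j [2 ∑_{m=0}^N Q_{im} F̃(U_{ij}, U_{mj}) + δ_{iN}(F*⁺_j − f̃(U_{Nj})) − δ_{i0}(F*⁻_j − f̃(U_{0j}))]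 − ω_i [2 ∑_{m=0}^N Q_{jm} G̃(U_{ij}, U_{im}) + δ_{jN}(G*⁺_i − g̃(U_{iN})) − δ_{j0}(G*⁻_i − g̃(U_{i0}))]. Then the total growth of each primary quantity reduces to surface terms: J ∑_{i,j=0}^N ω_i ω_j (U_t)_{ij} = − ∑_{j=0}^N ω_j (F*⁺_j − F*⁻_j) − ∑_{i=0}^N ω_i (G*⁺_i − G*⁻_i). -/
open Matrix BigOperators

/-!
Summed against symmetric two-point values `S i m = S m i`, the SBP matrix `Q` only sees its
symmetric part `(Q + Qᵀ)/2 = B/2`, so the volume term `2 ∑ᵢ ∑ₘ Qᵢₘ S i m` collapses to the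
corner values `S N N - S 0 0`. By consistency these are the physical fluxes at the two end
nodes, which are exactly cancelled by the surface corrections, leaving the numerical fluxes.
Summing the scheme over all nodes with the quadrature weights then reduces each coordinate
direction to its surface terms.
-/

section SBP

variable {α : Type*} [AddCommGroup α] [Module ℝ α] {N : ℕ}

lemma sum_boundaryMatrix_smul (S : Fin (N + 1) → Fin (N + 1) → α) :
    ∑ i, ∑ m, boundaryMatrix N i m • S i m = S (Fin.last N) (Fin.last N) - S 0 0 := by
  simp [boundaryMatrix, Matrix.diagonal_apply, ite_smul, add_smul, Finset.sum_add_distrib,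
    sub_eq_add_neg]

lemma sum_two_smul_sum_smul_of_symm (Q : Matrix (Fin (N + 1)) (Fin (N + 1)) ℝ)
    (hSBP : Q + Qᵀ = boundaryMatrix N) (S : Fin (N + 1) → Fin (N + 1) → α)
    (hS : ∀ i m, S i m = S m i) :
    ∑ i, (2 : ℝ) • ∑ m, Q i m • S i m = S (Fin.last N) (Fin.last N) - S 0 0 := by
  have htranspose : ∑ i, ∑ m, Q m i • S i m = ∑ i, ∑ m, Q i m • S i m := by
    rw [Finset.sum_comm]
    simp only [hS]
  rw [← sum_boundaryMatrix_smul S, ← hSBP]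
  simp only [Matrix.add_apply, Matrix.transpose_apply, add_smul, Finset.sum_add_distrib,
    htranspose, two_smul]

/-- The bracket of one coordinate direction in the scheme, along a line `V` of nodal values. -/
noncomputable def splitFormResidual (Q : Matrix (Fin (N + 1)) (Fin (N + 1)) ℝ)
    (F : α → α → α) (f : α → α) (Fp Fm : α) (V : Fin (N + 1) → α) (i : Fin (N + 1)) : α :=
  (2 : ℝ) • (∑ m, Q i m • F (V i) (V m))
    + (if i = Fin.last N then (1 : ℝ) else 0) • (Fp - f (V (Fin.last N)))
    - (if i = 0 then (1 : ℝ) else 0) • (Fm - f (V 0))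

lemma sum_splitFormResidual (Q : Matrix (Fin (N + 1)) (Fin (N + 1)) ℝ)
    (hSBP : Q + Qᵀ = boundaryMatrix N) (F : α → α → α) (f : α → α)
    (hsym : ∀ a b, F a b = F b a) (hcons : ∀ a, F a a = f a) (Fp Fm : α)
    (V : Fin (N + 1) → α) :
    ∑ i, splitFormResidual Q F f Fp Fm V i = Fp - Fm := by
  have hvolume := sum_two_smul_sum_smul_of_symm Q hSBP (fun i m => F (V i) (V m))
    fun i m => hsym _ _
  simp only [splitFormResidual, Finset.sum_sub_distrib, Finset.sum_add_distrib, hvolume,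
    hcons, ite_smul, one_smul, zero_smul, Finset.sum_ite_eq', Finset.mem_univ, if_true]
  abel

end SBP

theorem splitform_dgsem_primary_growth_general
    (N M : ℕ)
    (ω : Fin (N + 1) → ℝ) (J : ℝ)
    (Q : Matrix (Fin (N + 1)) (Fin (N + 1)) ℝ)
    (hSBP : Q + Q.transpose = boundaryMatrix N)
    (Ftil Gtil : (Fin M → ℝ) → (Fin M → ℝ) → (Fin M → ℝ))
    (ftil gtil : (Fin M → ℝ) → (Fin M → ℝ))
    (hFsym : ∀ a b, Ftil a b = Ftil b a)
    (hGsym : ∀ a b, Gtil a b = Gtil b a)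
    (hFcons : ∀ a, Ftil a a = ftil a)
    (hGcons : ∀ a, Gtil a a = gtil a)
    (U Ut : Fin (N + 1) → Fin (N + 1) → (Fin M → ℝ))
    (Fsp Fsm Gsp Gsm : Fin (N + 1) → (Fin M → ℝ))
    (hscheme : ∀ i j,
      (J * ω i * ω j) • Ut i j =
        -(ω j • ((2 : ℝ) • (∑ m, Q i m • Ftil (U i j) (U m j))
            + (if i = Fin.last N then (1 : ℝ) else 0) •
                (Fsp j - ftil (U (Fin.last N) j))
            - (if i = 0 then (1 : ℝ) else 0) • (Fsm j - ftil (U 0 j))))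
        - ω i • ((2 : ℝ) • (∑ m, Q j m • Gtil (U i j) (U i m))
            + (if j = Fin.last N then (1 : ℝ) else 0) •
                (Gsp i - gtil (U i (Fin.last N)))
            - (if j = 0 then (1 : ℝ) else 0) • (Gsm i - gtil (U i 0)))) :
    J • (∑ i, ∑ j, (ω i * ω j) • Ut i j)
      = -(∑ j, ω j • (Fsp j - Fsm j)) - ∑ i, ω i • (Gsp i - Gsm i) := by
  set RF := fun j => splitFormResidual Q Ftil ftil (Fsp j) (Fsm j) (fun m => U m j)
  set RG := fun i => splitFormResidual Q Gtil gtil (Gsp i) (Gsm i) (U i)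
  calc J • (∑ i, ∑ j, (ω i * ω j) • Ut i j)
      = ∑ i, ∑ j, (J * ω i * ω j) • Ut i j := by
        simp only [Finset.smul_sum, smul_smul, mul_assoc]
    _ = ∑ i, ∑ j, (-(ω j • RF j i) - ω i • RG i j) :=
        Finset.sum_congr rfl fun i _ => Finset.sum_congr rfl fun j _ => hscheme i j
    _ = -(∑ j, ω j • ∑ i, RF j i) - ∑ i, ω i • ∑ j, RG i j := by
        simp only [Finset.sum_sub_distrib, Finset.sum_neg_distrib, Finset.smul_sum]
        rw [Finset.sum_comm]
    _ = -(∑ j, ω j • (Fsp j - Fsm j)) - ∑ i, ω i • (Gsp i - Gsm i) := by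
        simp only [RF, RG, sum_splitFormResidual Q hSBP _ _ hFsym hFcons,
          sum_splitFormResidual Q hSBP _ _ hGsym hGcons]

/-- Lemma 1 of the paper, primary part: for the split-form DGSEM on one
element the total growth of the primary quantities reduces to surface terms. -/
theorem splitform_dgsem_primary_growth
    (N M : ℕ) (hM : 1 ≤ M)
    (ω : Fin (N + 1) → ℝ) (J : ℝ)
    (Q : Matrix (Fin (N + 1)) (Fin (N + 1)) ℝ)
    (hSBP : Q + Q.transpose = boundaryMatrix N)
    (Ftil Gtil : (Fin M → ℝ) → (Fin M → ℝ) → (Fin M → ℝ))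
    (ftil gtil : (Fin M → ℝ) → (Fin M → ℝ))
    (hFsym : ∀ a b, Ftil a b = Ftil b a)
    (hGsym : ∀ a b, Gtil a b = Gtil b a)
    (hFcons : ∀ a, Ftil a a = ftil a)
    (hGcons : ∀ a, Gtil a a = gtil a)
    (U Ut : Fin (N + 1) → Fin (N + 1) → (Fin M → ℝ))
    (Fsp Fsm Gsp Gsm : Fin (N + 1) → (Fin M → ℝ))
    (hscheme : ∀ i j,
      (J * ω i * ω j) • Ut i j =
        -(ω j • ((2 : ℝ) • (∑ m, Q i m • Ftil (U i j) (U m j))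
            + (if i = Fin.last N then (1 : ℝ) else 0) •
                (Fsp j - ftil (U (Fin.last N) j))
            - (if i = 0 then (1 : ℝ) else 0) • (Fsm j - ftil (U 0 j))))
        - ω i • ((2 : ℝ) • (∑ m, Q j m • Gtil (U i j) (U i m))
            + (if j = Fin.last N then (1 : ℝ) else 0) •
                (Gsp i - gtil (U i (Fin.last N)))
            - (if j = 0 then (1 : ℝ) else 0) • (Gsm i - gtil (U i 0)))) :
    J • (∑ i, ∑ j, (ω i * ω j) • Ut i j)
      = -(∑ j, ω j • (Fsp j - Fsm j)) - ∑ i, ω i • (Gsp i - Gsm i) :=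
  splitform_dgsem_primary_growth_general N M ω J Q hSBP Ftil Gtil ftil gtil hFsym hGsym hFcons
    hGcons U Ut Fsp Fsm Gsp Gsm hscheme
end
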